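/- Let G be a pseudocompact topological group and K its Weil completion (so K is a compact group in which G is G_δ-dense). Then the map M ↦ M ∩ G is a bijection between the set of co-Lie subgroups of K and the set of co-Lie subgroups of G; in particular cL(G) = cL(K). -/

import Mathlib

open Cardinal Topology Pointwise

universe u

/-- The pseudocharacter of a topological space at a point: the least cardinality of a family of
open neighbourhoods of the point whose intersection is the singleton of that point. -/
noncomputable def psiAt (X : Type u) [TopologicalSpace X] (x : X) : Cardinal.{u} :=
  sInf {c | ∃ S : Set (Set X), (∀ U ∈ S, IsOpen U ∧ x ∈ U) ∧ ⋂₀ S = {x} ∧ #S = c}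

/-- The pseudocharacter of a topological group. -/
noncomputable def psi (G : Type u) [TopologicalSpace G] [Group G] : Cardinal.{u} :=
  psiAt G 1

/-- A topological group `G` is pseudo-`τ`-fine if for every family of at most `τ` many
neighbourhoods of the identity there is a countable family of identity neighbourhoods whose
intersection is contained in the intersection of the given family. -/
def IsPseudoTauFine (τ : Cardinal.{u}) (G : Type u) [TopologicalSpace G] [Group G] : Prop :=
  ∀ (ι : Type u) (U : ι → Set G), #ι ≤ τ → (∀ i, U i ∈ 𝓝 (1 : G)) →
    ∃ V : ℕ → Set G, (∀ n, V n ∈ 𝓝 (1 : G)) ∧ (⋂ n, V n) ⊆ ⋂ i, U i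

/-- A topological space is pseudocompact if every continuous real-valued function on it
is bounded. -/
def Pseudocompact (X : Type u) [TopologicalSpace X] : Prop :=
  ∀ f : X → ℝ, Continuous f → ∃ C : ℝ, ∀ x, |f x| ≤ C

/-- A topological group is precompact (totally bounded, i.e. its Weil completion is compact)
if every identity neighbourhood has finitely many translates covering the group. -/
def PrecompactGroup (G : Type u) [TopologicalSpace G] [Group G] : Prop :=
  ∀ U ∈ 𝓝 (1 : G), ∃ F : Finset G, (Set.univ : Set G) ⊆ ⋃ g ∈ F, g • U

/-- The pseudo-fineness index: least cardinal `τ` such that `G` is not pseudo-`τ`-fine. -/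
noncomputable def pfi (G : Type u) [TopologicalSpace G] [Group G] : Cardinal.{u} :=
  sInf {τ | ¬ IsPseudoTauFine τ G}

/-- The weight of a topological space: least cardinality of a base. -/
noncomputable def wt (X : Type u) [TopologicalSpace X] : Cardinal.{u} :=
  sInf {c | ∃ B : Set (Set X), TopologicalSpace.IsTopologicalBasis B ∧ #B = c}

/-- The character of a topological space at a point: least cardinality of a neighbourhood base. -/
noncomputable def chiAt (X : Type u) [TopologicalSpace X] (x : X) : Cardinal.{u} :=
  sInf {c | ∃ S : Set (Set X), (∀ U ∈ S, U ∈ 𝓝 x) ∧ (∀ V ∈ 𝓝 x, ∃ U ∈ S, U ⊆ V) ∧ #S = c}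

/-- The density of a topological space: least cardinality of a dense subset. -/
noncomputable def dens (X : Type u) [TopologicalSpace X] : Cardinal.{u} :=
  sInf {c | ∃ s : Set X, Dense s ∧ #s = c}

/-- A topological group is (isomorphic to) a finite-dimensional real Lie group. -/
def IsLieGroupTop (L : Type u) [TopologicalSpace L] [Group L] : Prop :=
  ∃ (n : ℕ) (_cs : ChartedSpace (EuclideanSpace ℝ (Fin n)) L),
    LieGroup (modelWithCornersSelf ℝ (EuclideanSpace ℝ (Fin n))) (⊤ : ℕ∞) L

/-- The set of co-Lie subgroups of a topological group: closed normal subgroups with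
Lie quotient. -/
def coLieSubgroups (G : Type u) [TopologicalSpace G] [Group G] : Set (Subgroup G) :=
  {N | IsClosed (N : Set G) ∧ ∃ _h : N.Normal, IsLieGroupTop (G ⧸ N)}

/-- The co-Lie character: the number of co-Lie subgroups. -/
noncomputable def cL (G : Type u) [TopologicalSpace G] [Group G] : Cardinal.{u} :=
  #(coLieSubgroups G)

/-!
A co-Lie subgroup `M` of `K` is a `G_δ` set, being the preimage of the point `1` of the first
countable space `K ⧸ M`. So `G_δ`-density of `G` makes `G` meet every open part of every coset
of `M`: hence `M` is the closure of `M ∩ G`, and `G ⧸ (M ∩ G) → K ⧸ M` is a continuous open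
bijection. Conversely, if `N` is co-Lie in `G`, then `G ⧸ N` is a pseudocompact metrizable
group, hence compact, so `G ⧸ N → K ⧸ closure N` is continuous, injective, with compact dense
image, hence a homeomorphism. Both isomorphisms transport the Lie structure.
-/

section ChartTransport

variable {𝕜 : Type*} [NontriviallyNormedField 𝕜] {E : Type*} [NormedAddCommGroup E]
  [NormedSpace 𝕜 E] {H : Type*} [TopologicalSpace H] {M M' : Type*} [TopologicalSpace M]
  [TopologicalSpace M'] [ChartedSpace H M]

@[reducible] def Homeomorph.pullbackChartedSpace (F : M' ≃ₜ M) : ChartedSpace H M' :=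
  letI : ChartedSpace M M' := F.toOpenPartialHomeomorph.singletonChartedSpace rfl
  ChartedSpace.comp H M M'

theorem Homeomorph.chartAt_pullbackChartedSpace (F : M' ≃ₜ M) (x : M') :
    (letI := F.pullbackChartedSpace (H := H); chartAt H x) =
      F.toOpenPartialHomeomorph.trans (chartAt H (F x)) :=
  rfl

variable (I : ModelWithCorners 𝕜 E H) (n : WithTop ℕ∞) (F : M' ≃ₜ M)

theorem Homeomorph.isManifold_pullbackChartedSpace [IsManifold I n M] :
    letI := F.pullbackChartedSpace (H := H)
    IsManifold I n M' := by
  let := F.pullbackChartedSpace (H := H)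
  refine { compatible := ?_ }
  rintro _ _ ⟨_, rfl, g, hg, rfl⟩ ⟨_, rfl, g', hg', rfl⟩
  refine (contDiffGroupoid n I).mem_of_eqOnSource (StructureGroupoid.compatible _ hg hg') ⟨?_, ?_⟩
  · ext z
    simp
  · intro z _
    simp

theorem Homeomorph.contMDiff_of_pullbackChartedSpace [IsManifold I n M] :
    letI := F.pullbackChartedSpace (H := H)
    ContMDiff I I n F := by
  let := F.pullbackChartedSpace (H := H)
  have := F.isManifold_pullbackChartedSpace I n
  intro x
  have hsmooth : ContMDiffOn I I n ((chartAt H (F x)).symm ∘ chartAt H x) (chartAt H x).source :=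
    contMDiffOn_chart_symm.comp contMDiffOn_chart fun y hy => by
      simpa [F.chartAt_pullbackChartedSpace] using (chartAt H x).map_source hy
  refine (hsmooth.congr fun y hy => ?_).contMDiffAt ((chartAt H x).open_source.mem_nhds
    (mem_chart_source H x))
  simp only [F.chartAt_pullbackChartedSpace, mfld_simps] at hy ⊢
  exact ((chartAt H (F x)).left_inv hy).symm

theorem Homeomorph.contMDiff_symm_of_pullbackChartedSpace [IsManifold I n M] :
    letI := F.pullbackChartedSpace (H := H)
    ContMDiff I I n F.symm := by
  let := F.pullbackChartedSpace (H := H)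
  have := F.isManifold_pullbackChartedSpace I n
  intro y
  have hsmooth :
      ContMDiffOn I I n ((chartAt H (F.symm y)).symm ∘ chartAt H y) (chartAt H y).source :=
    contMDiffOn_chart_symm.comp contMDiffOn_chart fun z hz => by
      simpa [F.chartAt_pullbackChartedSpace] using (chartAt H y).map_source hz
  refine (hsmooth.congr fun z hz => ?_).contMDiffAt ((chartAt H y).open_source.mem_nhds
    (mem_chart_source H y))
  simp only [F.chartAt_pullbackChartedSpace, mfld_simps, F.apply_symm_apply] at hz ⊢
  rw [(chartAt H y).left_inv hz]

end ChartTransport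

open scoped Manifold in
theorem IsLieGroupTop.of_continuousMulEquiv {L L' : Type u} [TopologicalSpace L] [Group L]
    [TopologicalSpace L'] [Group L'] (e : L ≃ₜ* L') (h : IsLieGroupTop L) : IsLieGroupTop L' := by
  obtain ⟨n, _, _⟩ := h
  let F : L' ≃ₜ L := e.symm.toHomeomorph
  let cs := F.pullbackChartedSpace (H := EuclideanSpace ℝ (Fin n))
  have := F.isManifold_pullbackChartedSpace 𝓘(ℝ, EuclideanSpace ℝ (Fin n)) (⊤ : ℕ∞)
  have hF := F.contMDiff_of_pullbackChartedSpace 𝓘(ℝ, EuclideanSpace ℝ (Fin n)) (⊤ : ℕ∞)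
  have hF' := F.contMDiff_symm_of_pullbackChartedSpace 𝓘(ℝ, EuclideanSpace ℝ (Fin n)) (⊤ : ℕ∞)
  have hmul : (fun p : L' × L' => p.1 * p.2) =
      F.symm ∘ (fun q : L × L => q.1 * q.2) ∘ Prod.map F F := by
    funext p
    simp [F]
  have hinv : (fun a : L' => a⁻¹) = F.symm ∘ (fun b : L => b⁻¹) ∘ F := by
    funext a
    simp [F]
  refine ⟨n, cs, { contMDiff_mul := ?_, contMDiff_inv := ?_ }⟩
  · rw [hmul]
    exact hF'.comp ((contMDiff_mul _ _).comp (hF.prodMap hF))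
  · rw [hinv]
    exact hF'.comp ((contMDiff_inv _ _).comp hF)

theorem ChartedSpace.firstCountableTopology {H M : Type*} [TopologicalSpace H]
    [TopologicalSpace M] [ChartedSpace H M] [FirstCountableTopology H] :
    FirstCountableTopology M where
  nhds_generated_countable x := by
    rw [← (chartAt H x).symm_map_nhds_eq (mem_chart_source H x)]
    infer_instance

theorem IsLieGroupTop.firstCountableTopology {L : Type u} [TopologicalSpace L] [Group L]
    (h : IsLieGroupTop L) : FirstCountableTopology L := by
  obtain ⟨n, _, _⟩ := h
  exact ChartedSpace.firstCountableTopology (H := EuclideanSpace ℝ (Fin n))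

theorem IsTopologicalGroup.metrizableSpace (G : Type*) [TopologicalSpace G] [Group G]
    [IsTopologicalGroup G] [T2Space G] [FirstCountableTopology G] :
    TopologicalSpace.MetrizableSpace G := by
  let := IsTopologicalGroup.rightUniformSpace G
  have : (uniformity G).IsCountablyGenerated := by
    rw [uniformity_eq_comap_nhds_one']
    infer_instance
  exact UniformSpace.metrizableSpace

namespace Pseudocompact

variable {X Y : Type*} [TopologicalSpace X] [TopologicalSpace Y]

theorem of_surjective {f : X → Y} (hf : Continuous f) (hsurj : Function.Surjective f)
    (h : Pseudocompact X) : Pseudocompact Y := fun g hg =>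
  (h (g ∘ f) (hg.comp hf)).imp fun C hC y => by obtain ⟨x, rfl⟩ := hsurj y; exact hC x

/-- An infinite closed discrete set would carry, by Tietze, an unbounded continuous function. -/
theorem countablyCompactSpace [NormalSpace X] [T1Space X] (h : Pseudocompact X) :
    CountablyCompactSpace X := by
  rw [← isCountablyCompact_univ_iff, isCountablyCompact_iff_infinite_subset_has_accPt]
  intro B _ hB
  by_contra! hacc
  obtain ⟨hBclosed, hBdiscrete⟩ : IsClosed B ∧ IsDiscrete B :=
    isClosed_and_discrete_iff.mpr fun x => disjoint_iff.mpr (Filter.not_neBot.mp (hacc x trivial))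
  have := isDiscrete_iff_discreteTopology.mp hBdiscrete
  let e := hB.natEmbedding
  obtain ⟨f, hf⟩ := ContinuousMap.exists_restrict_eq hBclosed
    ⟨fun b => ((Function.invFun e b : ℕ) : ℝ), continuous_of_discreteTopology⟩
  obtain ⟨C, hC⟩ := h f f.continuous
  obtain ⟨m, hm⟩ := exists_nat_gt C
  have hfm : f (e m : X) = m := by
    have := DFunLike.congr_fun hf (e m)
    simp only [ContinuousMap.restrict_apply, ContinuousMap.coe_mk] at this
    rw [this, Function.leftInverse_invFun e.injective m]
  have := (abs_le.mp (hC (e m : X))).2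
  linarith

theorem compactSpace [TopologicalSpace.MetrizableSpace X] (h : Pseudocompact X) :
    CompactSpace X := by
  have := h.countablyCompactSpace
  rw [← isCompact_univ_iff, isCompact_iff_isSeqCompact]
  exact (isCountablyCompact_univ_iff.mpr this).isSeqCompact

end Pseudocompact

theorem IsLieGroupTop.compactSpace {L : Type u} [TopologicalSpace L] [Group L]
    [IsTopologicalGroup L] [T2Space L] (hl : IsLieGroupTop L) (hp : Pseudocompact L) :
    CompactSpace L := by
  have := hl.firstCountableTopology
  have := IsTopologicalGroup.metrizableSpace L
  exact hp.compactSpace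

section GDeltaDenseSubgroup

open Set

variable {K : Type*} [TopologicalSpace K] [Group K] [IsTopologicalGroup K] {G : Subgroup K}
  (hG : ∀ P : Set K, IsGδ P → P.Nonempty → (P ∩ G).Nonempty)
include hG

theorem Subgroup.topologicalClosure_inf_eq {M : Subgroup K} (hMc : IsClosed (M : Set K))
    (hMδ : IsGδ (M : Set K)) : (M ⊓ G).topologicalClosure = M := by
  refine le_antisymm ((M ⊓ G).topologicalClosure_minimal inf_le_left hMc) fun m hm => ?_
  refine mem_closure_iff.mpr fun U hU hmU => ?_
  obtain ⟨x, ⟨hxU, hxM⟩, hxG⟩ := hG (U ∩ M) (hU.isGδ.inter hMδ) ⟨m, hmU, hm⟩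
  exact ⟨x, hxU, hxM, hxG⟩

theorem QuotientGroup.image_mk_inter_eq {M : Subgroup K} (hMδ : IsGδ (M : Set K)) {U : Set K}
    (hU : IsOpen U) : (QuotientGroup.mk '' (U ∩ G) : Set (K ⧸ M)) = QuotientGroup.mk '' U := by
  refine (image_mono inter_subset_left).antisymm ?_
  rintro _ ⟨k, hkU, rfl⟩
  have hcoset : IsGδ (U ∩ (fun x => x⁻¹ * k) ⁻¹' M) :=
    hU.isGδ.inter (hMδ.preimage (continuous_inv.mul continuous_const))
  obtain ⟨g, ⟨hgU, hgk⟩, hgG⟩ := hG _ hcoset ⟨k, hkU, by simp⟩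
  exact ⟨g, ⟨hgU, hgG⟩, QuotientGroup.eq.mpr hgk⟩

end GDeltaDenseSubgroup

section QuotientSubgroupOf

open Set

variable {K : Type*} [Group K] {G : Subgroup K} (N : Subgroup G) [N.Normal] (M : Subgroup K)
  [M.Normal]

abbrev QuotientGroup.subgroupOfMap (hNM : M.subgroupOf G = N) : G ⧸ N →* K ⧸ M :=
  QuotientGroup.map N M G.subtype hNM.ge

variable {N M}

theorem QuotientGroup.subgroupOfMap_mk (hNM : M.subgroupOf G = N) (g : G) :
    subgroupOfMap N M hNM g = ((g : K) : K ⧸ M) :=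
  rfl

theorem QuotientGroup.injective_subgroupOfMap (hNM : M.subgroupOf G = N) :
    Function.Injective (subgroupOfMap N M hNM) := by
  refine (injective_iff_map_eq_one _).mpr fun x hx => ?_
  induction x using QuotientGroup.induction_on with
  | H g =>
    rw [subgroupOfMap_mk, QuotientGroup.eq_one_iff] at hx
    rw [QuotientGroup.eq_one_iff, ← hNM]
    exact hx

theorem QuotientGroup.range_subgroupOfMap (hNM : M.subgroupOf G = N) :
    range (subgroupOfMap N M hNM) = QuotientGroup.mk '' (G : Set K) := by
  ext q
  constructor
  · rintro ⟨x, rfl⟩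
    induction x using QuotientGroup.induction_on with
    | H g => exact ⟨g, g.2, rfl⟩
  · rintro ⟨k, hk, rfl⟩
    exact ⟨((⟨k, hk⟩ : G) : G ⧸ N), rfl⟩

theorem QuotientGroup.continuous_subgroupOfMap [TopologicalSpace K] (hNM : M.subgroupOf G = N) :
    Continuous (subgroupOfMap N M hNM) :=
  (QuotientGroup.isQuotientMap_mk N).continuous_iff.mpr
    (QuotientGroup.continuous_mk.comp continuous_subtype_val)

end QuotientSubgroupOf

section LieQuotients

open Set QuotientGroup

variable {K : Type u} [TopologicalSpace K] [Group K] {G : Subgroup K} {N : Subgroup G} [N.Normal]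
  {M : Subgroup K} [M.Normal]

theorem IsLieGroupTop.quotient_of_subgroupOf [CompactSpace (G ⧸ N)] [T2Space (K ⧸ M)]
    (hd : Dense (G : Set K)) (hNM : M.subgroupOf G = N) (h : IsLieGroupTop (G ⧸ N)) :
    IsLieGroupTop (K ⧸ M) := by
  have hdense : DenseRange (subgroupOfMap N M hNM) := by
    have := (mk_surjective (s := M)).denseRange.comp hd.denseRange_val continuous_mk
    rwa [DenseRange, range_comp, Subtype.range_coe, ← range_subgroupOfMap hNM] at this
  have hcont := continuous_subgroupOfMap hNM
  have hsurj : Function.Surjective (subgroupOfMap N M hNM) := by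
    rw [← range_eq_univ, ← hdense.closure_range, (isCompact_range hcont).isClosed.closure_eq]
  let e : G ⧸ N ≃ₜ* K ⧸ M := ContinuousMulEquiv.mk'
    (hcont.homeoOfEquivCompactToT2
      (f := (MulEquiv.ofBijective _ ⟨injective_subgroupOfMap hNM, hsurj⟩).toEquiv))
    (map_mul (subgroupOfMap N M hNM))
  exact h.of_continuousMulEquiv e

variable [IsTopologicalGroup K]

theorem QuotientGroup.isOpenMap_subgroupOfMap
    (hG : ∀ P : Set K, IsGδ P → P.Nonempty → (P ∩ G).Nonempty) (hMδ : IsGδ (M : Set K))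
    (hNM : M.subgroupOf G = N) : IsOpenMap (subgroupOfMap N M hNM) := by
  intro O hO
  obtain ⟨V, hV, hVO⟩ := isOpen_induced_iff.mp (hO.preimage continuous_mk)
  have hO' : subgroupOfMap N M hNM '' O = mk '' (V ∩ G) := by
    rw [← (mk_surjective (s := N)).image_preimage O, image_image, ← hVO, inter_comm,
      ← Subtype.image_preimage_coe, image_image]
    rfl
  rw [hO', image_mk_inter_eq hG hMδ hV]
  exact isOpenMap_coe V hV

theorem IsLieGroupTop.quotient_subgroupOf
    (hG : ∀ P : Set K, IsGδ P → P.Nonempty → (P ∩ G).Nonempty) (hMδ : IsGδ (M : Set K))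
    (hNM : M.subgroupOf G = N) (h : IsLieGroupTop (K ⧸ M)) : IsLieGroupTop (G ⧸ N) := by
  have hsurj : Function.Surjective (subgroupOfMap N M hNM) := by
    rw [← range_eq_univ, range_subgroupOfMap, ← univ_inter (G : Set K),
      image_mk_inter_eq hG hMδ isOpen_univ, image_univ_of_surjective mk_surjective]
  let e : G ⧸ N ≃ₜ* K ⧸ M := ContinuousMulEquiv.mk'
    ((MulEquiv.ofBijective _ ⟨injective_subgroupOfMap hNM, hsurj⟩).toEquiv
      |>.toHomeomorphOfContinuousOpen (continuous_subgroupOfMap hNM)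
        (isOpenMap_subgroupOfMap hG hMδ hNM))
    (map_mul (subgroupOfMap N M hNM))
  exact h.of_continuousMulEquiv e.symm

end LieQuotients

section Closure

variable {K : Type*} [TopologicalSpace K] [Group K] [IsTopologicalGroup K] {G : Subgroup K}

theorem Subgroup.subgroupOf_topologicalClosure_map_subtype {N : Subgroup G}
    (hN : IsClosed (N : Set G)) : (N.map G.subtype).topologicalClosure.subgroupOf G = N := by
  ext g
  rw [Subgroup.mem_subgroupOf, ← SetLike.mem_coe, Subgroup.topologicalClosure_coe,
    Subgroup.coe_map, Subgroup.coe_subtype, ← closure_subtype, hN.closure_eq, SetLike.mem_coe]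

theorem Subgroup.normal_topologicalClosure_map_subtype (hd : Dense (G : Set K)) (N : Subgroup G)
    [N.Normal] : (N.map G.subtype).topologicalClosure.Normal := by
  set M := (N.map G.subtype).topologicalClosure
  have hMc : IsClosed (M : Set K) := (N.map G.subtype).isClosed_topologicalClosure
  have hconj : ∀ g ∈ G, ∀ m ∈ M, g * m * g⁻¹ ∈ M := fun g hg =>
    have hNM : N.map G.subtype ≤ M.comap (MulAut.conj g).toMonoidHom := by
      rintro _ ⟨n, hn, rfl⟩
      exact (N.map G.subtype).le_topologicalClosure ⟨_, ‹N.Normal›.conj_mem n hn ⟨g, hg⟩, rfl⟩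
    (N.map G.subtype).topologicalClosure_minimal hNM
      (hMc.preimage (by fun_prop : Continuous fun x => g * x * g⁻¹))
  refine ⟨fun m hm k => ?_⟩
  have hclosed : IsClosed {k : K | k * m * k⁻¹ ∈ M} := hMc.preimage (by fun_prop)
  exact (hd.closure_eq ▸ closure_minimal (fun g hg => hconj g hg m hm) hclosed) (Set.mem_univ k)

end Closure

section CoLie

open QuotientGroup

variable {K : Type u} [TopologicalSpace K] [Group K] [IsTopologicalGroup K] {G : Subgroup K}

theorem Subgroup.isGδ_of_mem_coLieSubgroups {M : Subgroup K} (hM : M ∈ coLieSubgroups K) :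
    IsGδ (M : Set K) := by
  obtain ⟨hMc, hMn, hMl⟩ := hM
  have : IsClosed (M : Set K) := hMc
  have := hMl.firstCountableTopology
  have hMfiber : (M : Set K) = QuotientGroup.mk ⁻¹' {(1 : K ⧸ M)} := by
    ext
    simp [QuotientGroup.eq_one_iff]
  rw [hMfiber]
  exact (IsGδ.singleton 1).preimage continuous_mk

theorem Subgroup.subgroupOf_mem_coLieSubgroups
    (hG : ∀ P : Set K, IsGδ P → P.Nonempty → (P ∩ G).Nonempty) {M : Subgroup K}
    (hM : M ∈ coLieSubgroups K) : M.subgroupOf G ∈ coLieSubgroups G := by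
  have hMδ := M.isGδ_of_mem_coLieSubgroups hM
  obtain ⟨hMc, hMn, hMl⟩ := hM
  exact ⟨hMc.preimage continuous_subtype_val, inferInstance, hMl.quotient_subgroupOf hG hMδ rfl⟩

theorem Subgroup.topologicalClosure_map_subtype_mem_coLieSubgroups (hd : Dense (G : Set K))
    (hpc : Pseudocompact G) {N : Subgroup G} (hN : N ∈ coLieSubgroups G) :
    (N.map G.subtype).topologicalClosure ∈ coLieSubgroups K := by
  obtain ⟨hNc, hNn, hNl⟩ := hN
  have : IsClosed (N : Set G) := hNc
  have := hNl.compactSpace (hpc.of_surjective continuous_mk mk_surjective)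
  have := Subgroup.normal_topologicalClosure_map_subtype hd N
  have := (N.map G.subtype).isClosed_topologicalClosure
  exact ⟨this, inferInstance,
    hNl.quotient_of_subgroupOf hd (Subgroup.subgroupOf_topologicalClosure_map_subtype hNc)⟩

end CoLie

theorem statement_12_general (K : Type u) [TopologicalSpace K] [Group K] [IsTopologicalGroup K]
    (G : Subgroup K) (hd : Dense (G : Set K))
    (hGdelta : ∀ P : Set K, (∃ U : ℕ → Set K, (∀ n, IsOpen (U n)) ∧ P = ⋂ n, U n) →
      P.Nonempty → (P ∩ G).Nonempty)
    (hpc : Pseudocompact ↥G) :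
    Set.BijOn (fun M : Subgroup K => M.comap G.subtype) (coLieSubgroups K)
      (coLieSubgroups ↥G) ∧ cL ↥G = cL K := by
  have hG : ∀ P : Set K, IsGδ P → P.Nonempty → (P ∩ G).Nonempty := fun P hP =>
    hGdelta P (isGδ_iff_eq_iInter_nat.mp hP)
  have hbij : Set.BijOn (fun M : Subgroup K => M.subgroupOf G) (coLieSubgroups K)
      (coLieSubgroups G) := by
    refine Set.InvOn.bijOn (f' := fun N => (N.map G.subtype).topologicalClosure) ⟨?_, ?_⟩
      (fun _ hM => Subgroup.subgroupOf_mem_coLieSubgroups hG hM)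
      (fun _ hN => Subgroup.topologicalClosure_map_subtype_mem_coLieSubgroups hd hpc hN)
    · intro M hM
      simp only [Subgroup.subgroupOf_map_subtype]
      exact Subgroup.topologicalClosure_inf_eq hG hM.1 (M.isGδ_of_mem_coLieSubgroups hM)
    · intro N hN
      exact Subgroup.subgroupOf_topologicalClosure_map_subtype hN.1
  exact ⟨hbij, Cardinal.mk_congr (hbij.equiv _).symm⟩

theorem statement_12 (K : Type u) [TopologicalSpace K] [Group K] [IsTopologicalGroup K] [T2Space K]
    [CompactSpace K] (G : Subgroup K) (hd : Dense (G : Set K))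
    (hGdelta : ∀ P : Set K, (∃ U : ℕ → Set K, (∀ n, IsOpen (U n)) ∧ P = ⋂ n, U n) →
      P.Nonempty → (P ∩ G).Nonempty)
    (hpc : Pseudocompact ↥G) :
    Set.BijOn (fun M : Subgroup K => M.comap G.subtype) (coLieSubgroups K)
      (coLieSubgroups ↥G) ∧ cL ↥G = cL K :=
  statement_12_general K G hd hGdelta hpc
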